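/- (Counterexample to the tangency principle without global lower Lipschitz B) Let Ω ⊂ ℝⁿ be a bounded domain whose boundary point x_b satisfies an interior cone condition, u ≡ 0, and v ∈ C^∞(closure Ω) with v > 0 in Ω, v(x_b) = 0, and all normal derivatives of v at x_b equal to zero (zero of infinite order). With A(x,z,η) = η and B(x,z,η) = −(z/v(x))Σᵢv_{x_ix_i}(x), u and v are C¹ weak (indeed classical) solutions of div(A(·,u,Du)) + B(·,u,Du) ≥ 0 and div(A(·,v,Dv)) + B(·,v,Dv) ≤ 0 respectively, u < v in Ω, u(x_b) = v(x_b), B is locally lower Lipschitz in z, and yet v − u vanishes to infinite order at x_b. -/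

import Mathlib

open Set Metric
open scoped RealInnerProductSpace

/-- `pd i u` is the `i`-th partial derivative of `u`. -/
noncomputable def pd {n : ℕ} (i : Fin n) (u : EuclideanSpace ℝ (Fin n) → ℝ) :
    EuclideanSpace ℝ (Fin n) → ℝ :=
  fun x => fderiv ℝ u x (EuclideanSpace.single i 1)

/-- Directional derivative operator in direction `ν`. -/
noncomputable def dirD {n : ℕ} (ν : EuclideanSpace ℝ (Fin n))
    (w : EuclideanSpace ℝ (Fin n) → ℝ) : EuclideanSpace ℝ (Fin n) → ℝ :=
  fun x => fderiv ℝ w x ν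

/-- The open cone of height `h`, apex `xb`, axis direction `e` and half-opening `θ`. -/
def openCone {n : ℕ} (xb e : EuclideanSpace ℝ (Fin n)) (θ h : ℝ) :
    Set (EuclideanSpace ℝ (Fin n)) :=
  {x | 0 < ‖x - xb‖ ∧ ‖x - xb‖ < h ∧ ‖x - xb‖ * Real.cos θ < ⟪x - xb, e⟫}

theorem stmt18 {n : ℕ} (Ω : Set (EuclideanSpace ℝ (Fin n)))
    (hΩo : IsOpen Ω) (hΩc : IsConnected Ω) (hΩb : Bornology.IsBounded Ω)
    (xb : EuclideanSpace ℝ (Fin n)) (hxb : xb ∈ frontier Ω)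
    -- interior cone condition at x_b
    (e : EuclideanSpace ℝ (Fin n)) (he : ‖e‖ = 1) (θ h : ℝ)
    (hθ : θ ∈ Set.Ioo 0 (Real.pi / 2)) (hh : 0 < h)
    (hcone : openCone xb e θ h ⊆ Ω)
    -- outward normal direction at x_b
    (ν : EuclideanSpace ℝ (Fin n)) (hν : ‖ν‖ = 1)
    -- u ≡ 0
    (u : EuclideanSpace ℝ (Fin n) → ℝ) (hu : ∀ x, u x = 0)
    -- v ∈ C^∞(closure Ω), v > 0 in Ω, v(x_b) = 0, all normal derivatives vanish at x_b
    (v : EuclideanSpace ℝ (Fin n) → ℝ) (hv : ContDiff ℝ (⊤ : ℕ∞) v)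
    (hvpos : ∀ x ∈ Ω, 0 < v x) (hvb : v xb = 0)
    (hvinf : ∀ m : ℕ, (dirD ν)^[m] v xb = 0)
    -- A(x,z,η) = η and B(x,z,η) = -(z/v(x)) Σᵢ v_{x_ix_i}(x)
    (B : EuclideanSpace ℝ (Fin n) → ℝ → EuclideanSpace ℝ (Fin n) → ℝ)
    (hB : ∀ x z η, B x z η = -(z / v x) * ∑ i, pd i (pd i v) x) :
    -- div(A(·,u,Du)) + B(·,u,Du) = Δu + B(·,u,Du) ≥ 0 on Ω (classically, hence weakly)
    (∀ x ∈ Ω, 0 ≤ (∑ i, pd i (pd i u) x) + B x (u x) (WithLp.toLp 2 (fun l => pd l u x))) ∧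
    -- div(A(·,v,Dv)) + B(·,v,Dv) = Δv + B(·,v,Dv) ≤ 0 on Ω
    (∀ x ∈ Ω, (∑ i, pd i (pd i v) x) + B x (v x) (WithLp.toLp 2 (fun l => pd l v x)) ≤ 0) ∧
    -- u < v in Ω and u(x_b) = v(x_b)
    (∀ x ∈ Ω, u x < v x) ∧ u xb = v xb ∧
    -- B is locally lower Lipschitz in z
    (∀ K : Set (EuclideanSpace ℝ (Fin n)), IsCompact K → K ⊆ Ω →
      ∀ Mz : ℝ, 0 < Mz → ∃ MK : ℝ, 0 < MK ∧
        ∀ x ∈ K, ∀ z₁ ∈ Set.Icc (-Mz) Mz, ∀ z₂ ∈ Set.Icc (-Mz) Mz,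
          ∀ η₁ η₂ : EuclideanSpace ℝ (Fin n), z₂ ≤ z₁ →
            -(MK * (z₁ - z₂)) ≤ B x z₁ η₁ - B x z₂ η₂) ∧
    -- yet v - u vanishes to infinite order at x_b
    (∀ m : ℕ, (dirD ν)^[m] (fun x => v x - u x) xb = 0) := by

  have hu' : u = fun _ => 0 := funext hu
  have hpdu : ∀ i x, pd i u x = 0 := by
    intro i x; simp [pd, hu']
  have hpdu2 : ∀ i x, pd i (pd i u) x = 0 := by
    intro i x
    have : pd i u = fun _ => (0:ℝ) := funext (hpdu i)
    simp [pd, this]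
  refine ⟨?_, ?_, ?_, ?_, ?_, ?_⟩
  · intro x hx
    simp [hpdu2, hB, hu]
  · intro x hx
    have hvx : v x ≠ 0 := (hvpos x hx).ne'
    rw [hB, div_self hvx]
    ring_nf
    exact le_refl _
  · intro x hx; rw [hu]; exact hvpos x hx
  · rw [hu, hvb]
  · intro K hK hKΩ Mz hMz
    set S : EuclideanSpace ℝ (Fin n) → ℝ := fun x => ∑ i, pd i (pd i v) x with hS
    have hpdv : ∀ i : Fin n, ContDiff ℝ (⊤ : ℕ∞) (pd i v) := by
      intro i
      exact (hv.fderiv_right (by simp)).clm_apply contDiff_const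
    have hScont : Continuous S := by
      apply continuous_finset_sum
      intro i _
      exact ((((hpdv i).fderiv_right (m := (⊤ : ℕ∞)) (by simp)).clm_apply contDiff_const).continuous)
    have hcont : ContinuousOn (fun x => S x / v x) K := by
      apply ContinuousOn.div hScont.continuousOn hv.continuous.continuousOn
      intro x hx; exact (hvpos x (hKΩ hx)).ne'
    obtain ⟨C, hC⟩ := hK.exists_bound_of_continuousOn hcont
    refine ⟨max C 0 + 1, by positivity, ?_⟩
    intro x hx z₁ hz₁ z₂ hz₂ η₁ η₂ hz
    rw [hB, hB]
    have hvx : v x ≠ 0 := (hvpos x (hKΩ hx)).ne'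
    have key : -(z₁ / v x) * S x - -(z₂ / v x) * S x = -((z₁ - z₂) * (S x / v x)) := by
      field_simp; ring
    rw [key]
    have h1 : (z₁ - z₂) * (S x / v x) ≤ (z₁ - z₂) * (max C 0 + 1) := by
      apply mul_le_mul_of_nonneg_left _ (by linarith)
      calc S x / v x ≤ |S x / v x| := le_abs_self _
        _ ≤ C := hC x hx
        _ ≤ max C 0 + 1 := by
            have := le_max_left C 0; linarith
    have : -((z₁ - z₂) * (max C 0 + 1)) ≤ -((z₁ - z₂) * (S x / v x)) := by linarith
    calc -((max C 0 + 1) * (z₁ - z₂)) = -((z₁ - z₂) * (max C 0 + 1)) := by ring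
      _ ≤ _ := this
  · intro m
    have : (fun x => v x - u x) = v := by
      funext x; rw [hu]; ring
    rw [this]; exact hvinf m
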